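/- arXiv:1310.7417 — 3 statements merged into one kernel-verified Lean document; each statement's English description precedes it below -/
import Mathlib

section
/- The collection S_∞ := {∅} ∪ {{u} | u ∈ A*} ∪ {Cone_∞(u) | u ∈ A*}, where Cone_∞(u) = {v ∈ A^∞ | u is a prefix of v}, is a semiring of sets on A^∞ = A* ∪ A^ω. -/
open MeasureTheory

/-- `A^∞ = A* ∪ A^ω`, the finite and infinite words over `A`. -/
abbrev WordsInf (A : Type*) := List A ⊕ (ℕ → A)

/-- `u` is a prefix of the (finite or infinite) word `w`. -/
def IsPrefixInf {A : Type*} (u : List A) (w : WordsInf A) : Prop :=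
  match w with
  | Sum.inl v => u <+: v
  | Sum.inr v => ∀ i : Fin u.length, v i = u.get i

/-- The ∞-cone of a finite word `u`: all finite and infinite words with prefix `u`. -/
def ConeInf {A : Type*} (u : List A) : Set (WordsInf A) :=
  {w | IsPrefixInf u w}

/-- `S_∞`: the empty set, singletons of finite words, and ∞-cones. -/
def SInf (A : Type*) : Set (Set (WordsInf A)) :=
  {∅} ∪ {s | ∃ u : List A, s = {Sum.inl u}} ∪ {s | ∃ u : List A, s = ConeInf u}

open Function

/-! Two cones are nested or disjoint, since a word has at most one prefix of each length; this
settles intersections. For differences the key case is `Cone u \ Cone (u ++ w)`: walking from `u`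
to `u ++ w`, it collects at each node `p` the finite word `p` and the cones of the siblings of the
next node, finitely many because `A` is finite. Every other difference is empty, a member of `S_∞`,
or reduces to this one via `Cone v \ {v} = ⋃ a, Cone (v ++ [a])`. -/

def IsFiniteDisjointUnion {α : Type*} (C : Set (Set α)) (s : Set α) : Prop :=
  ∃ I : Finset (Set α), ↑I ⊆ C ∧ (I : Set (Set α)).PairwiseDisjoint id ∧ s = ⋃₀ ↑I

namespace IsFiniteDisjointUnion

variable {α : Type*} {C : Set (Set α)} {s t r : Set α}

lemma empty : IsFiniteDisjointUnion C ∅ := ⟨∅, by simp, by simp, by simp⟩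

lemma of_mem (hs : s ∈ C) : IsFiniteDisjointUnion C s :=
  ⟨{s}, by simpa using hs, by simp, by simp⟩

lemma union (hs : IsFiniteDisjointUnion C s) (ht : IsFiniteDisjointUnion C t)
    (hst : Disjoint s t) : IsFiniteDisjointUnion C (s ∪ t) := by
  classical
  obtain ⟨I, hIC, hI, rfl⟩ := hs
  obtain ⟨J, hJC, hJ, rfl⟩ := ht
  refine ⟨I ∪ J, by simpa using ⟨hIC, hJC⟩, ?_, by simp [Set.sUnion_union]⟩
  rw [Finset.coe_union, Set.pairwiseDisjoint_union]
  exact ⟨hI, hJ, fun i hi j hj _ =>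
    hst.mono (Set.subset_sUnion_of_mem hi) (Set.subset_sUnion_of_mem hj)⟩

lemma iUnion {ι : Type*} [Finite ι] {f : ι → Set α} (hf : ∀ i, f i ∈ C)
    (hd : Pairwise (Disjoint on f)) : IsFiniteDisjointUnion C (⋃ i, f i) := by
  classical
  have := Fintype.ofFinite ι
  refine ⟨Finset.univ.image f, by simpa [Set.range_subset_iff] using hf, ?_, by simp⟩
  rintro _ hi _ hj hij
  obtain ⟨i, -, rfl⟩ := Finset.mem_image.mp hi
  obtain ⟨j, -, rfl⟩ := Finset.mem_image.mp hj
  exact hd fun h => hij (congrArg f h)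

lemma sdiff_of_subset (hts : t ⊆ s) (hrt : r ⊆ t) (hst : IsFiniteDisjointUnion C (s \ t))
    (htr : IsFiniteDisjointUnion C (t \ r)) : IsFiniteDisjointUnion C (s \ r) := by
  rw [← Set.sdiff_union_sdiff_cancel hts hrt]
  exact hst.union htr (disjoint_sdiff_self_left.mono_right Set.sdiff_subset)

end IsFiniteDisjointUnion

section Cones

variable {A : Type*} {u v : List A}

lemma inl_mem_coneInf {w : List A} : Sum.inl w ∈ ConeInf u ↔ u <+: w := Iff.rfl

lemma inr_mem_coneInf {f : Stream' A} : Sum.inr f ∈ ConeInf u ↔ f.take u.length = u := by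
  refine ⟨fun h => List.ext_getElem (by simp) fun i hi _ => ?_, fun h i => ?_⟩
  · rw [Stream'.take_get]
    exact h ⟨i, by simpa using hi⟩
  · rw [List.get_eq_getElem, ← List.getElem_of_eq h (by simp), Stream'.take_get]
    rfl

lemma inl_mem_coneInf_self (u : List A) : Sum.inl u ∈ ConeInf u := List.prefix_refl u

lemma inl_notMem_coneInf_append_singleton (u : List A) (a : A) :
    Sum.inl u ∉ ConeInf (u ++ [a]) := fun h => by
  simpa using (inl_mem_coneInf.mp h).length_le

lemma coneInf_subset_of_prefix (h : u <+: v) : ConeInf v ⊆ ConeInf u := by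
  rintro (w | (f : Stream' A)) hw
  · exact h.trans hw
  · refine inr_mem_coneInf.mpr ?_
    calc f.take u.length = (f.take v.length).take u.length := by
          rw [Stream'.take_take, min_eq_right h.length_le]
      _ = u := by rw [inr_mem_coneInf.mp hw, ← List.prefix_iff_eq_take.mp h]

lemma prefix_or_prefix_of_mem_coneInf {w : WordsInf A} (hu : w ∈ ConeInf u)
    (hv : w ∈ ConeInf v) : u <+: v ∨ v <+: u := by
  rcases w with w | (f : Stream' A)
  · exact List.prefix_or_prefix_of_prefix hu hv
  · rw [← inr_mem_coneInf.mp hu, ← inr_mem_coneInf.mp hv]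
    rcases le_total u.length v.length with h | h
    · exact Or.inl (Stream'.take_prefix_take_left _ _ f h)
    · exact Or.inr (Stream'.take_prefix_take_left _ _ f h)

lemma disjoint_coneInf_of_not_prefix (huv : ¬u <+: v) (hvu : ¬v <+: u) :
    Disjoint (ConeInf u) (ConeInf v) :=
  Set.disjoint_left.mpr fun _ hu hv => (prefix_or_prefix_of_mem_coneInf hu hv).elim huv hvu

lemma disjoint_coneInf_append_singleton {a b : A} (hab : a ≠ b) :
    Disjoint (ConeInf (u ++ [a])) (ConeInf (u ++ [b])) := by
  have key : ∀ {a b : A}, u ++ [a] <+: u ++ [b] → a = b := fun h => by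
    simpa using h.eq_of_length (by simp)
  exact disjoint_coneInf_of_not_prefix (fun h => hab (key h)) (fun h => hab (key h).symm)

lemma coneInf_eq_insert_iUnion (u : List A) :
    ConeInf u = insert (Sum.inl u) (⋃ a, ConeInf (u ++ [a])) := by
  refine subset_antisymm ?_ (Set.insert_subset (inl_mem_coneInf_self u)
    (Set.iUnion_subset fun a => coneInf_subset_of_prefix (List.prefix_append u [a])))
  rintro (w | (f : Stream' A)) hw
  · obtain ⟨_ | ⟨a, t⟩, rfl⟩ := inl_mem_coneInf.mp hw
    · exact Or.inl (by simp)
    · exact Or.inr (Set.mem_iUnion.mpr ⟨a, ⟨t, by simp⟩⟩)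
  · refine Or.inr (Set.mem_iUnion.mpr ⟨f u.length, inr_mem_coneInf.mpr ?_⟩)
    rw [List.length_append, List.length_singleton, Stream'.take_succ', inr_mem_coneInf.mp hw]
    rfl

lemma coneInf_sdiff_singleton (u : List A) :
    ConeInf u \ {Sum.inl u} = ⋃ a, ConeInf (u ++ [a]) := by
  rw [coneInf_eq_insert_iUnion u, Set.insert_sdiff_self_of_notMem]
  simpa using fun a => inl_notMem_coneInf_append_singleton u a

lemma coneInf_sdiff_coneInf_append_singleton (u : List A) (a : A) :
    ConeInf u \ ConeInf (u ++ [a]) =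
      {Sum.inl u} ∪ ⋃ b : {b // b ≠ a}, ConeInf (u ++ [(b : A)]) := by
  ext w
  rw [coneInf_eq_insert_iUnion u]
  simp only [Set.mem_sdiff, Set.mem_insert_iff, Set.mem_union, Set.mem_singleton_iff,
    Set.mem_iUnion, Subtype.exists, exists_prop]
  constructor
  · rintro ⟨rfl | ⟨b, hb⟩, ha⟩
    · exact Or.inl rfl
    · exact Or.inr ⟨b, fun h => ha (h ▸ hb), hb⟩
  · rintro (rfl | ⟨b, hba, hb⟩)
    · exact ⟨Or.inl rfl, inl_notMem_coneInf_append_singleton u a⟩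
    · exact ⟨Or.inr ⟨b, hb⟩, Set.disjoint_left.mp (disjoint_coneInf_append_singleton hba) hb⟩

end Cones

section SInf

variable {A : Type*} {u v : List A}

lemma empty_mem_sInf : (∅ : Set (WordsInf A)) ∈ SInf A := Or.inl (Or.inl rfl)

lemma singleton_mem_sInf (u : List A) : ({Sum.inl u} : Set (WordsInf A)) ∈ SInf A :=
  Or.inl (Or.inr ⟨u, rfl⟩)

lemma coneInf_mem_sInf (u : List A) : ConeInf u ∈ SInf A := Or.inr ⟨u, rfl⟩

lemma mem_sInf_of_subset_singleton {s : Set (WordsInf A)} (h : s ⊆ {Sum.inl u}) :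
    s ∈ SInf A := by
  rcases Set.subset_singleton_iff_eq.mp h with rfl | rfl
  exacts [empty_mem_sInf, singleton_mem_sInf u]

lemma coneInf_inter_coneInf_mem_sInf (u v : List A) : ConeInf u ∩ ConeInf v ∈ SInf A := by
  by_cases huv : u <+: v
  · rw [Set.inter_eq_self_of_subset_right (coneInf_subset_of_prefix huv)]
    exact coneInf_mem_sInf v
  by_cases hvu : v <+: u
  · rw [Set.inter_eq_self_of_subset_left (coneInf_subset_of_prefix hvu)]
    exact coneInf_mem_sInf u
  rw [(disjoint_coneInf_of_not_prefix huv hvu).inter_eq]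
  exact empty_mem_sInf

variable [Finite A]

lemma isFiniteDisjointUnion_coneInf_sdiff_coneInf_of_prefix (h : u <+: v) :
    IsFiniteDisjointUnion (SInf A) (ConeInf u \ ConeInf v) := by
  obtain ⟨w, rfl⟩ := h
  induction w generalizing u with
  | nil => simpa using IsFiniteDisjointUnion.empty
  | cons a w ih =>
    rw [← List.singleton_append, ← List.append_assoc]
    refine .sdiff_of_subset (coneInf_subset_of_prefix (List.prefix_append u [a]))
      (coneInf_subset_of_prefix (List.prefix_append _ w)) ?_ ih
    rw [coneInf_sdiff_coneInf_append_singleton]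
    refine .union (.of_mem (singleton_mem_sInf u))
      (.iUnion (fun _ => coneInf_mem_sInf _) fun b c hbc => ?_) ?_
    · exact disjoint_coneInf_append_singleton (Subtype.coe_ne_coe.mpr hbc)
    · exact Set.disjoint_singleton_left.mpr
        (by simpa using fun b _ => inl_notMem_coneInf_append_singleton u b)

lemma isFiniteDisjointUnion_coneInf_sdiff_coneInf (u v : List A) :
    IsFiniteDisjointUnion (SInf A) (ConeInf u \ ConeInf v) := by
  by_cases hvu : v <+: u
  · rw [Set.sdiff_eq_empty.mpr (coneInf_subset_of_prefix hvu)]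
    exact .empty
  by_cases huv : u <+: v
  · exact isFiniteDisjointUnion_coneInf_sdiff_coneInf_of_prefix huv
  rw [(disjoint_coneInf_of_not_prefix huv hvu).sdiff_eq_left]
  exact .of_mem (coneInf_mem_sInf u)

lemma isFiniteDisjointUnion_coneInf_sdiff_singleton (u v : List A) :
    IsFiniteDisjointUnion (SInf A) (ConeInf u \ {Sum.inl v}) := by
  by_cases h : u <+: v
  · refine .sdiff_of_subset (coneInf_subset_of_prefix h) (by simpa using inl_mem_coneInf_self v)
      (isFiniteDisjointUnion_coneInf_sdiff_coneInf_of_prefix h) ?_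
    rw [coneInf_sdiff_singleton]
    exact .iUnion (fun _ => coneInf_mem_sInf _) fun _ _ => disjoint_coneInf_append_singleton
  rw [Set.sdiff_singleton_eq_self (show Sum.inl v ∉ ConeInf u from h)]
  exact .of_mem (coneInf_mem_sInf u)

end SInf

/-- for a finite alphabet `A`, `S_∞` is a semiring of sets on `A^∞`. -/
theorem sInf_isSetSemiring (A : Type*) [Fintype A] :
    MeasureTheory.IsSetSemiring (SInf A) := by
  refine ⟨empty_mem_sInf, ?_, ?_⟩
  · rintro s ((rfl | ⟨u, rfl⟩) | ⟨u, rfl⟩) t ht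
    · simpa using empty_mem_sInf
    · exact mem_sInf_of_subset_singleton Set.inter_subset_left
    rcases ht with (rfl | ⟨v, rfl⟩) | ⟨v, rfl⟩
    · simpa using empty_mem_sInf
    · exact mem_sInf_of_subset_singleton Set.inter_subset_right
    · exact coneInf_inter_coneInf_mem_sInf u v
  · rintro s ((rfl | ⟨u, rfl⟩) | ⟨u, rfl⟩) t ht
    · rw [Set.empty_sdiff]
      exact IsFiniteDisjointUnion.empty
    · exact IsFiniteDisjointUnion.of_mem (mem_sInf_of_subset_singleton Set.sdiff_subset)
    rcases ht with (rfl | ⟨v, rfl⟩) | ⟨v, rfl⟩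
    · rw [Set.sdiff_empty]
      exact IsFiniteDisjointUnion.of_mem (coneInf_mem_sInf u)
    · exact isFiniteDisjointUnion_coneInf_sdiff_singleton u v
    · exact isFiniteDisjointUnion_coneInf_sdiff_coneInf u v
end

section
/- If (S_n)_{n∈ℕ} is a sequence of pairwise disjoint sets in S_ω (the semiring of ∅ and ω-cones over a finite alphabet A) whose union is itself an element of S_ω, then S_n = ∅ for all but finitely many n. -/
open MeasureTheory

/-- The ω-cone of a finite word `u`: all infinite words having `u` as a prefix. -/
def ConeOmega {A : Type*} (u : List A) : Set (ℕ → A) :=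
  {v | ∀ i : Fin u.length, v i = u.get i}

/-- `S_ω`: the empty set together with all ω-cones. -/
def SOmega (A : Type*) : Set (Set (ℕ → A)) :=
  {∅} ∪ {s | ∃ u : List A, s = ConeOmega u}

/-!
Give `A` the discrete topology. Then `ℕ → A` is compact (Tychonoff, `A` finite) and every
cone is clopen, being cut out by finitely many coordinate conditions. A compact set written as
a disjoint union of open sets is covered by finitely many of them, and disjointness forces every
nonempty piece to be among those finitely many.
-/

theorem IsCompact.finite_nonempty_of_pairwise_disjoint_isOpen {X ι : Type*}
    [TopologicalSpace X] {S : ι → Set X} (hcompact : IsCompact (⋃ i, S i))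
    (hopen : ∀ i, IsOpen (S i)) (hdisj : Pairwise fun i j => Disjoint (S i) (S j)) :
    {i | (S i).Nonempty}.Finite := by
  obtain ⟨t, hcover⟩ := hcompact.elim_finite_subcover S hopen subset_rfl
  refine t.finite_toSet.subset fun i ⟨x, hxi⟩ => ?_
  obtain ⟨j, hj, hxj⟩ := Set.mem_iUnion₂.1 (hcover (Set.mem_iUnion_of_mem i hxi))
  obtain rfl : j = i := by
    by_contra hji
    exact (hdisj hji).ne_of_mem hxj hxi rfl
  exact hj

section DiscreteAlphabet

variable {A : Type*}

theorem coneOmega_eq_iInter_preimage (u : List A) :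
    ConeOmega u = ⋂ i : Fin u.length, (fun v : ℕ → A => v i) ⁻¹' {u.get i} := by
  ext v
  simp [ConeOmega]

variable [TopologicalSpace A] [DiscreteTopology A]

theorem isClopen_coneOmega (u : List A) : IsClopen (ConeOmega u) := by
  rw [coneOmega_eq_iInter_preimage]
  exact isClopen_iInter_of_finite fun i =>
    (isClopen_discrete _).preimage (continuous_apply (i : ℕ))

theorem isClopen_of_mem_sOmega {s : Set (ℕ → A)} (hs : s ∈ SOmega A) : IsClopen s := by
  rcases hs with rfl | ⟨u, rfl⟩
  · exact isClopen_empty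
  · exact isClopen_coneOmega u

theorem isCompact_of_mem_sOmega [Finite A] {s : Set (ℕ → A)} (hs : s ∈ SOmega A) :
    IsCompact s :=
  (isClopen_of_mem_sOmega hs).isClosed.isCompact

end DiscreteAlphabet

theorem sOmega_union_finitely_many_nonempty_general (A : Type*) [Fintype A]
    (S : ℕ → Set (ℕ → A)) (hS : ∀ n, S n ∈ SOmega A)
    (hdisj : Pairwise fun m n => Disjoint (S m) (S n))
    (hunion : (⋃ n, S n) ∈ SOmega A) :
    {n | S n ≠ ∅}.Finite := by
  let _ : TopologicalSpace A := ⊥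
  have : DiscreteTopology A := ⟨rfl⟩
  simpa only [Set.nonempty_iff_ne_empty] using
    IsCompact.finite_nonempty_of_pairwise_disjoint_isOpen (isCompact_of_mem_sOmega hunion)
      (fun n => (isClopen_of_mem_sOmega (hS n)).isOpen) hdisj

/-- a countable disjoint family in `S_ω` whose union lies in `S_ω`
has all but finitely many members empty. -/
theorem sOmega_union_finitely_many_nonempty (A : Type*) [Fintype A] [Nonempty A]
    (S : ℕ → Set (ℕ → A)) (hS : ∀ n, S n ∈ SOmega A)
    (hdisj : Pairwise fun m n => Disjoint (S m) (S n))
    (hunion : (⋃ n, S n) ∈ SOmega A) :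
    {n | S n ≠ ∅}.Finite :=
  sOmega_union_finitely_many_nonempty_general A S hS hdisj hunion
end

section
/- If (S_n)_{n∈ℕ} is a sequence of pairwise disjoint sets in S_∞ (the semiring of ∅, singletons of finite words, and ∞-cones over a finite alphabet A) whose union is itself an element of S_∞, then S_n = ∅ for all but finitely many n. -/
open MeasureTheory

/-!
Only a union that is a cone `Cone_∞(u)` needs an argument; otherwise the union has at most one
point and disjointness leaves at most one nonempty member. With `A` discrete, the infinite words of
`Cone_∞(u)` form a compact subset of `A^ω` covered by the open sets `S_n ∩ A^ω`, so finitely many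
`S_n` (indices in a finite set `t`) already cover it; by disjointness every `S_n` containing an
infinite word has `n ∈ t`. A singleton `{w}` is handled by padding `w` to an infinite word: it lies
in some cone `Cone_∞(v)` with index in `t` that does not contain `w`, which forces `|w| < |v|`,
and there are only finitely many such `w`.
-/

theorem finite_setOf_exists_mem_of_pairwise_disjoint {ι α : Type*} {S : ι → Set α}
    (hdisj : Pairwise fun m n => Disjoint (S m) (S n)) {P : Set α} (hP : P.Finite) :
    {i | ∃ x ∈ P, x ∈ S i}.Finite := by
  have hsub : ∀ x, {i | x ∈ S i}.Subsingleton := fun x i hi j hj =>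
    by_contra fun hij => (hdisj hij).ne_of_mem hi hj rfl
  refine (hP.biUnion fun x _ => (hsub x).finite).subset ?_
  rintro i ⟨x, hx, hxi⟩
  exact Set.mem_biUnion hx hxi

namespace WordsInf

variable {A : Type*}

def padInf (w : List A) (a : A) : ℕ → A := fun i => w.getD i a

theorem inr_mem_coneInf_iff {u : List A} {f : ℕ → A} :
    Sum.inr f ∈ ConeInf u ↔ ∀ i (hi : i < u.length), f i = u[i] :=
  ⟨fun h i hi => h ⟨i, hi⟩, fun h i => h i i.2⟩

theorem preimage_inr_coneInf (u : List A) :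
    Sum.inr ⁻¹' ConeInf u = ⋂ i : Fin u.length, (fun f : ℕ → A => f i) ⁻¹' {u.get i} := by
  ext f
  simp [ConeInf, IsPrefixInf]

theorem isClopen_preimage_inr_coneInf [TopologicalSpace A] [DiscreteTopology A] (u : List A) :
    IsClopen (Sum.inr ⁻¹' ConeInf u : Set (ℕ → A)) := by
  rw [preimage_inr_coneInf]
  exact isClopen_iInter_of_finite fun i => (isClopen_discrete _).preimage (continuous_apply _)

theorem isOpen_preimage_inr_of_mem_sInf [TopologicalSpace A] [DiscreteTopology A]
    {s : Set (WordsInf A)} (hs : s ∈ SInf A) : IsOpen (Sum.inr ⁻¹' s : Set (ℕ → A)) := by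
  rcases hs with (rfl | ⟨u, rfl⟩) | ⟨u, rfl⟩
  · exact isOpen_empty
  · convert isOpen_empty
    ext
    simp
  · exact (isClopen_preimage_inr_coneInf u).isOpen

theorem inr_padInf_mem_coneInf {u w : List A} (h : Sum.inl w ∈ ConeInf u) (a : A) :
    Sum.inr (padInf w a) ∈ ConeInf u := by
  rw [inr_mem_coneInf_iff]
  intro i hi
  rw [padInf, List.getD_eq_getElem _ _ (hi.trans_le h.length_le)]
  exact (List.IsPrefix.getElem h hi).symm

theorem inl_mem_coneInf_of_inr_padInf_mem {u w : List A} {a : A}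
    (h : Sum.inr (padInf w a) ∈ ConeInf u) (hlen : u.length ≤ w.length) :
    Sum.inl w ∈ ConeInf u := by
  rw [inr_mem_coneInf_iff] at h
  have htake : w.take u.length = u := List.ext_getElem (by simp [hlen]) fun i _ hi => by
    rw [List.getElem_take, ← h i hi, padInf, List.getD_eq_getElem]
  exact htake ▸ List.take_prefix _ _

theorem finite_setOf_inr_padInf_mem_inl_notMem [Finite A] {s : Set (WordsInf A)}
    (hs : s ∈ SInf A) (a : A) :
    {w : List A | Sum.inr (padInf w a) ∈ s ∧ Sum.inl w ∉ s}.Finite := by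
  rcases hs with (rfl | ⟨u, rfl⟩) | ⟨u, rfl⟩
  · simp
  · simp
  · refine (List.finite_length_lt A u.length).subset fun w ⟨hinr, hinl⟩ => ?_
    by_contra hlen
    exact hinl (inl_mem_coneInf_of_inr_padInf_mem hinr (not_lt.1 hlen))

end WordsInf

open WordsInf

theorem finite_setOf_ne_empty_of_iUnion_eq_coneInf {A : Type*} [Finite A] (a : A)
    {S : ℕ → Set (WordsInf A)} (hS : ∀ n, S n ∈ SInf A)
    (hdisj : Pairwise fun m n => Disjoint (S m) (S n)) {u : List A}
    (hunion : ⋃ n, S n = ConeInf u) :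
    {n | S n ≠ ∅}.Finite := by
  let _ : TopologicalSpace A := ⊥
  have : DiscreteTopology A := ⟨rfl⟩
  obtain ⟨t, ht⟩ := (isClopen_preimage_inr_coneInf u).isClosed.isCompact.elim_finite_subcover
    (fun n => Sum.inr ⁻¹' S n) (fun n => isOpen_preimage_inr_of_mem_sInf (hS n))
    (by simp [← hunion, Set.preimage_iUnion])
  have hcover : ∀ w, Sum.inl w ∈ ConeInf u → ∃ m ∈ t, Sum.inr (padInf w a) ∈ S m := fun w hw =>
    by simpa using ht (inr_padInf_mem_coneInf hw a)
  have hmem_cone : ∀ {n x}, x ∈ S n → x ∈ ConeInf u := fun hx =>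
    hunion ▸ Set.mem_iUnion_of_mem _ hx
  have hinr_mem : ∀ {n f}, Sum.inr f ∈ S n → n ∈ t := by
    intro n f hf
    obtain ⟨m, hm, hfm⟩ := Set.mem_iUnion₂.1 (ht (hmem_cone hf))
    obtain rfl : n = m := by_contra fun hnm => (hdisj hnm).ne_of_mem hf hfm rfl
    exact hm
  have hinl_mem : ∀ {n w}, S n = {Sum.inl w} →
      w ∈ ⋃ m ∈ t, {w : List A | Sum.inr (padInf w a) ∈ S m ∧ Sum.inl w ∉ S m} := by
    intro n w hn
    obtain ⟨m, hm, hwm⟩ := hcover w (hmem_cone (hn ▸ rfl : Sum.inl w ∈ S n))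
    refine Set.mem_iUnion₂.2 ⟨m, hm, hwm, fun hwm' => ?_⟩
    obtain rfl : n = m := by_contra fun hnm => (hdisj hnm).ne_of_mem (hn ▸ rfl) hwm' rfl
    simp [hn] at hwm
  have hW := t.finite_toSet.biUnion fun m _ => finite_setOf_inr_padInf_mem_inl_notMem (hS m) a
  have hsingletons := finite_setOf_exists_mem_of_pairwise_disjoint hdisj (hW.image Sum.inl)
  refine (t.finite_toSet.union hsingletons).subset fun n hn => ?_
  rcases hS n with (hn' | ⟨w, hn'⟩) | ⟨v, hn'⟩
  · exact absurd hn' hn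
  · exact Or.inr ⟨_, Set.mem_image_of_mem _ (hinl_mem hn'), hn' ▸ rfl⟩
  · exact Or.inl (hinr_mem (hn' ▸ inr_padInf_mem_coneInf List.prefix_rfl a))

/-- a countable disjoint family in `S_∞` whose union lies in `S_∞`
has all but finitely many members empty. -/
theorem sInf_union_finitely_many_nonempty (A : Type*) [Fintype A] [Nonempty A]
    (S : ℕ → Set (WordsInf A)) (hS : ∀ n, S n ∈ SInf A)
    (hdisj : Pairwise fun m n => Disjoint (S m) (S n))
    (hunion : (⋃ n, S n) ∈ SInf A) :
    {n | S n ≠ ∅}.Finite := by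
  have hfinite_of_finite : (⋃ n, S n).Finite → {n | S n ≠ ∅}.Finite := fun hfin =>
    (finite_setOf_exists_mem_of_pairwise_disjoint hdisj hfin).subset fun n hn =>
      let ⟨x, hx⟩ := Set.nonempty_iff_ne_empty.2 hn
      ⟨x, Set.mem_iUnion_of_mem n hx, hx⟩
  rcases hunion with (hu | ⟨w, hu⟩) | ⟨u, hu⟩
  · exact hfinite_of_finite (hu ▸ Set.finite_empty)
  · exact hfinite_of_finite (hu ▸ Set.finite_singleton _)
  · exact finite_setOf_ne_empty_of_iUnion_eq_coneInf (Classical.arbitrary A) hS hdisj hu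
end
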